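/- arXiv:2007.06147 — 2 statements merged into one kernel-verified Lean document; each statement's English description precedes it below -/
import Mathlib

section
/- Let n ≥ 1, let Ω ⊆ ℝⁿ be open, let κ ∈ ℝ, and let a, c : Ω → ℂ and b : Ω → ℂⁿ be measurable with |1/a(x)| ≤ M_a, |b(x)| ≤ M_b and |c(x)| ≤ M_c for all x ∈ Ω, where M_a, M_b, M_c ≥ 0. Let u₁, u₂ : ℝⁿ → ℂ be smooth compactly supported functions with supports in Ω, and suppose the Poincaré inequalities ‖u₁‖_{L²(Ω)} ≤ C_P ‖∇u₁‖_{L²(Ω)} and ‖u₂‖_{L²(Ω)} ≤ C_P ‖∇u₂‖_{L²(Ω)} hold for some constant C_P > 0. Define B((u₁,u₂),(u₁,u₂)) := ∫_Ω |∇u₁|² dx + ∫_Ω |∇u₂|² dx + (1/i) ∫_Ω (b · ∇u₁) conj(u₂) dx − κ² ∫_Ω c u₁ conj(u₂) dx + ∫_Ω (1/a) u₂ conj(u₁) dx. Then Re B((u₁,u₂),(u₁,u₂)) ≥ C̃₀ ‖∇u₁‖²_{L²(Ω)} + C₀ ‖∇u₂‖²_{L²(Ω)}, where C̃₀ := 1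 − (1/2) C_P² ( M_b² + κ² M_c + M_a ) and C₀ := (1/2)( 1 − C_P² ( κ² M_c + M_a ) ). In particular, if the coefficients are small enough that C̃₀ > 0 and C₀ > 0, the form B is coercive: Re B(U,U) ≥ β (‖∇u₁‖²_{L²(Ω)} + ‖∇u₂‖²_{L²(Ω)}) with β = min{C̃₀, C₀} > 0. -/
open MeasureTheory

lemma integral_CS {α : Type*} [MeasurableSpace α] {μ : Measure α} {f g : α → ℝ}
    (hf : ∀ x, 0 ≤ f x) (hg : ∀ x, 0 ≤ g x)
    (hfm : AEStronglyMeasurable f μ) (hgm : AEStronglyMeasurable g μ)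
    (hf2 : Integrable (fun x => f x ^ 2) μ) (hg2 : Integrable (fun x => g x ^ 2) μ) :
    ∫ x, f x * g x ∂μ ≤ Real.sqrt (∫ x, f x ^ 2 ∂μ) * Real.sqrt (∫ x, g x ^ 2 ∂μ) := by
  have hpq : Real.HolderConjugate 2 2 := Real.holderConjugate_iff.mpr ⟨one_lt_two, by norm_num⟩
  have hfL : MemLp f (ENNReal.ofReal 2) μ := by
    rw [show ENNReal.ofReal 2 = 2 by simp]
    exact (memLp_two_iff_integrable_sq hfm).mpr hf2
  have hgL : MemLp g (ENNReal.ofReal 2) μ := by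
    rw [show ENNReal.ofReal 2 = 2 by simp]
    exact (memLp_two_iff_integrable_sq hgm).mpr hg2
  have h := integral_mul_le_Lp_mul_Lq_of_nonneg hpq (Filter.Eventually.of_forall hf)
    (Filter.Eventually.of_forall hg) hfL hgL
  have e : ∀ (F : α → ℝ), (∫ x, F x ^ (2:ℝ) ∂μ) = ∫ x, F x ^ 2 ∂μ := by
    intro F
    refine integral_congr_ae (Filter.Eventually.of_forall fun x => ?_)
    have h2 := Real.rpow_natCast (F x) 2
    norm_num at h2 ⊢
  rw [e, e] at h
  refine h.trans (le_of_eq ?_)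
  rw [Real.sqrt_eq_rpow, Real.sqrt_eq_rpow]

lemma neg_norm_le_re (z : ℂ) : -‖z‖ ≤ z.re := by
  have := (abs_le.mp (Complex.abs_re_le_norm z)).1
  exact this

lemma re_le_norm (z : ℂ) : z.re ≤ ‖z‖ := by
  have := (abs_le.mp (Complex.abs_re_le_norm z)).2
  exact this

/-- The `i`-th partial derivative of a complex-valued function on `ℝⁿ`. -/
noncomputable def pdE (n : ℕ) (u : EuclideanSpace ℝ (Fin n) → ℂ) (i : Fin n)
    (x : EuclideanSpace ℝ (Fin n)) : ℂ :=
  fderiv ℝ u x (EuclideanSpace.single i 1)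

lemma pdE_continuous (n : ℕ) (u : EuclideanSpace ℝ (Fin n) → ℂ) (hu : ContDiff ℝ (⊤ : ℕ∞) u)
    (i : Fin n) : Continuous (pdE n u i) :=
  (hu.continuous_fderiv (by simp)).clm_apply continuous_const

lemma pdE_zero (n : ℕ) (u : EuclideanSpace ℝ (Fin n) → ℂ) (x : EuclideanSpace ℝ (Fin n))
    (hx : x ∉ tsupport u) (i : Fin n) : pdE n u i x = 0 := by
  have hopen : IsOpen (tsupport u)ᶜ := (isClosed_tsupport u).isOpen_compl
  have h0 : u =ᶠ[nhds x] 0 := by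
    filter_upwards [hopen.mem_nhds hx] with y hy
    exact image_eq_zero_of_notMem_tsupport hy
  have : fderiv ℝ u x = fderiv ℝ (0 : EuclideanSpace ℝ (Fin n) → ℂ) x := h0.fderiv_eq
  rw [pdE, this]
  rw [show (0 : EuclideanSpace ℝ (Fin n) → ℂ) = fun _ => (0:ℂ) from rfl, fderiv_fun_const]
  simp
set_option maxHeartbeats 400000 in

lemma arith_main (M_a M_b M_c C_P κ : ℝ) (hMa : 0 ≤ M_a) (hMb : 0 ≤ M_b) (hMc : 0 ≤ M_c)
    (hCP : 0 < C_P) (D₁ D₂ N₁ N₂ : ℝ) (hD₁0 : 0 ≤ D₁) (hD₂0 : 0 ≤ D₂)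
    (hP₁ : Real.sqrt N₁ ≤ C_P * Real.sqrt D₁) (hP₂ : Real.sqrt N₂ ≤ C_P * Real.sqrt D₂)
    (zb zc za : ℝ)
    (hzb : -(M_b * (Real.sqrt D₁ * Real.sqrt N₂)) ≤ zb)
    (hzc : zc ≤ κ ^ 2 * (M_c * (Real.sqrt N₁ * Real.sqrt N₂)))
    (hza : -(M_a * (Real.sqrt N₂ * Real.sqrt N₁)) ≤ za) :
    (1 - (1 / 2) * C_P ^ 2 * (M_b ^ 2 + κ ^ 2 * M_c + M_a)) * D₁
      + (1 / 2) * (1 - C_P ^ 2 * (κ ^ 2 * M_c + M_a)) * D₂ ≤ D₁ + D₂ + zb - zc + za := by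
  have hsD₁ : Real.sqrt D₁ ^ 2 = D₁ := Real.sq_sqrt hD₁0
  have hsD₂ : Real.sqrt D₂ ^ 2 = D₂ := Real.sq_sqrt hD₂0
  set x := Real.sqrt D₁ with hxdef
  set y := Real.sqrt D₂ with hydef
  set p := Real.sqrt N₁ with hpdef
  set q := Real.sqrt N₂ with hqdef
  have hx0 : 0 ≤ x := Real.sqrt_nonneg _
  have hy0 : 0 ≤ y := Real.sqrt_nonneg _
  have hp0 : 0 ≤ p := Real.sqrt_nonneg _
  have hq0 : 0 ≤ q := Real.sqrt_nonneg _
  rw [← hsD₁, ← hsD₂]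
  clear_value x y p q
  have h1 : M_b * (x * q) ≤ 1 / 2 * (M_b ^ 2 * C_P ^ 2 * x ^ 2) + 1 / 2 * y ^ 2 := by
    nlinarith [mul_le_mul_of_nonneg_left hP₂ (mul_nonneg hMb hx0),
      sq_nonneg (M_b * C_P * x - y)]
  have h2 : p * q ≤ C_P ^ 2 * ((x ^ 2 + y ^ 2) / 2) := by
    nlinarith [mul_le_mul hP₁ hP₂ hq0 (mul_nonneg hCP.le hx0),
      sq_nonneg (C_P * x - C_P * y)]
  have h3 : κ ^ 2 * (M_c * (p * q)) ≤ κ ^ 2 * M_c * (C_P ^ 2 * ((x ^ 2 + y ^ 2) / 2)) := by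
    nlinarith [mul_le_mul_of_nonneg_left h2 (mul_nonneg (sq_nonneg κ) hMc)]
  have h4 : M_a * (q * p) ≤ M_a * (C_P ^ 2 * ((x ^ 2 + y ^ 2) / 2)) := by
    nlinarith [mul_le_mul_of_nonneg_left h2 hMa]
  linarith [hzb, hzc, hza, h1, h3, h4]

/-- The diagonal of the sesquilinear form of the reduced biharmonic system:
`B((u₁,u₂),(u₁,u₂)) = ∫ |∇u₁|² + ∫ |∇u₂|² + (1/i)∫ (b·∇u₁) conj u₂
  − κ² ∫ c u₁ conj u₂ + ∫ (1/a) u₂ conj u₁` over `Ω`. -/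
noncomputable def sesquiBDiag (n : ℕ) (Ω : Set (EuclideanSpace ℝ (Fin n))) (κ : ℝ)
    (a c : EuclideanSpace ℝ (Fin n) → ℂ)
    (b : EuclideanSpace ℝ (Fin n) → EuclideanSpace ℂ (Fin n))
    (u₁ u₂ : EuclideanSpace ℝ (Fin n) → ℂ) : ℂ :=
  ((∫ x in Ω, ∑ i : Fin n, ‖pdE n u₁ i x‖ ^ 2 : ℝ) : ℂ)
    + ((∫ x in Ω, ∑ i : Fin n, ‖pdE n u₂ i x‖ ^ 2 : ℝ) : ℂ)
    + (1 / Complex.I) *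
        (∫ x in Ω, (∑ i : Fin n, b x i * pdE n u₁ i x) * starRingEnd ℂ (u₂ x))
    - (κ : ℂ) ^ 2 * (∫ x in Ω, c x * u₁ x * starRingEnd ℂ (u₂ x))
    + (∫ x in Ω, (a x)⁻¹ * u₂ x * starRingEnd ℂ (u₁ x))

/-- **Coercivity of the sesquilinear form of the reduced biharmonic system.**
Under the bounds `|1/a| ≤ M_a`, `|b| ≤ M_b`, `|c| ≤ M_c` on `Ω` and the Poincaré
inequalities `‖uⱼ‖_{L²} ≤ C_P ‖∇uⱼ‖_{L²}`, one has
`Re B(U,U) ≥ C̃₀ ‖∇u₁‖² + C₀ ‖∇u₂‖²` with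
`C̃₀ = 1 − (1/2)C_P²(M_b² + κ²M_c + M_a)` and `C₀ = (1/2)(1 − C_P²(κ²M_c + M_a))`;
in particular, if `C̃₀, C₀ > 0` the form is coercive with `β = min{C̃₀, C₀}`. -/
theorem sesquiB_coercive (n : ℕ) (hn : 1 ≤ n)
    (Ω : Set (EuclideanSpace ℝ (Fin n))) (hΩ : IsOpen Ω) (κ : ℝ)
    (M_a M_b M_c : ℝ) (hMa : 0 ≤ M_a) (hMb : 0 ≤ M_b) (hMc : 0 ≤ M_c)
    (a c : EuclideanSpace ℝ (Fin n) → ℂ)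
    (b : EuclideanSpace ℝ (Fin n) → EuclideanSpace ℂ (Fin n))
    (ha : Measurable a) (hb : ∀ i : Fin n, Measurable fun x => b x i) (hc : Measurable c)
    (haM : ∀ x ∈ Ω, ‖(a x)⁻¹‖ ≤ M_a)
    (hbM : ∀ x ∈ Ω, ‖b x‖ ≤ M_b)
    (hcM : ∀ x ∈ Ω, ‖c x‖ ≤ M_c)
    (u₁ u₂ : EuclideanSpace ℝ (Fin n) → ℂ)
    (hu₁ : ContDiff ℝ (⊤ : ℕ∞) u₁) (hu₂ : ContDiff ℝ (⊤ : ℕ∞) u₂)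
    (hu₁s : HasCompactSupport u₁) (hu₂s : HasCompactSupport u₂)
    (hu₁Ω : tsupport u₁ ⊆ Ω) (hu₂Ω : tsupport u₂ ⊆ Ω)
    (C_P : ℝ) (hCP : 0 < C_P)
    (hP₁ : Real.sqrt (∫ x in Ω, ‖u₁ x‖ ^ 2) ≤
      C_P * Real.sqrt (∫ x in Ω, ∑ i : Fin n, ‖pdE n u₁ i x‖ ^ 2))
    (hP₂ : Real.sqrt (∫ x in Ω, ‖u₂ x‖ ^ 2) ≤
      C_P * Real.sqrt (∫ x in Ω, ∑ i : Fin n, ‖pdE n u₂ i x‖ ^ 2)) :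
    (1 - (1 / 2) * C_P ^ 2 * (M_b ^ 2 + κ ^ 2 * M_c + M_a)) *
          (∫ x in Ω, ∑ i : Fin n, ‖pdE n u₁ i x‖ ^ 2)
        + (1 / 2) * (1 - C_P ^ 2 * (κ ^ 2 * M_c + M_a)) *
          (∫ x in Ω, ∑ i : Fin n, ‖pdE n u₂ i x‖ ^ 2) ≤
        (sesquiBDiag n Ω κ a c b u₁ u₂).re ∧
      (0 < 1 - (1 / 2) * C_P ^ 2 * (M_b ^ 2 + κ ^ 2 * M_c + M_a) →
        0 < (1 / 2) * (1 - C_P ^ 2 * (κ ^ 2 * M_c + M_a)) →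
        min (1 - (1 / 2) * C_P ^ 2 * (M_b ^ 2 + κ ^ 2 * M_c + M_a))
            ((1 / 2) * (1 - C_P ^ 2 * (κ ^ 2 * M_c + M_a))) *
            ((∫ x in Ω, ∑ i : Fin n, ‖pdE n u₁ i x‖ ^ 2)
              + ∫ x in Ω, ∑ i : Fin n, ‖pdE n u₂ i x‖ ^ 2) ≤
          (sesquiBDiag n Ω κ a c b u₁ u₂).re) := by
  set D₁ := ∫ x in Ω, ∑ i : Fin n, ‖pdE n u₁ i x‖ ^ 2 with hD₁def
  set D₂ := ∫ x in Ω, ∑ i : Fin n, ‖pdE n u₂ i x‖ ^ 2 with hD₂def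
  set N₁ := ∫ x in Ω, ‖u₁ x‖ ^ 2 with hN₁def
  set N₂ := ∫ x in Ω, ‖u₂ x‖ ^ 2 with hN₂def
  -- continuity
  have hA₁c : Continuous (fun x => ∑ i : Fin n, ‖pdE n u₁ i x‖ ^ 2) :=
    continuous_finset_sum _ fun i _ => ((pdE_continuous n u₁ hu₁ i).norm.pow 2)
  have hF₁c : Continuous (fun x => Real.sqrt (∑ i : Fin n, ‖pdE n u₁ i x‖ ^ 2)) :=
    Real.continuous_sqrt.comp hA₁c
  have hG₁c : Continuous (fun x => ‖u₁ x‖) := hu₁.continuous.norm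
  have hG₂c : Continuous (fun x => ‖u₂ x‖) := hu₂.continuous.norm
  -- supports
  have hA₁s : HasCompactSupport (fun x => ∑ i : Fin n, ‖pdE n u₁ i x‖ ^ 2) :=
    HasCompactSupport.intro hu₁s fun x hx => by simp [pdE_zero n u₁ x hx]
  have hG₁s : HasCompactSupport (fun x => ‖u₁ x‖) :=
    HasCompactSupport.intro hu₁s fun x hx => by
      simp [image_eq_zero_of_notMem_tsupport hx]
  have hG₂s : HasCompactSupport (fun x => ‖u₂ x‖) :=
    HasCompactSupport.intro hu₂s fun x hx => by
      simp [image_eq_zero_of_notMem_tsupport hx]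
  -- integrability
  have hA₁i : Integrable (fun x => ∑ i : Fin n, ‖pdE n u₁ i x‖ ^ 2) (volume.restrict Ω) :=
    (hA₁c.integrable_of_hasCompactSupport hA₁s).integrableOn
  have hF₁sq : Integrable
      (fun x => Real.sqrt (∑ i : Fin n, ‖pdE n u₁ i x‖ ^ 2) ^ 2) (volume.restrict Ω) :=
    hA₁i.congr (Filter.Eventually.of_forall fun x => (Real.sq_sqrt (by positivity)).symm)
  have hG₁sq : Integrable (fun x => ‖u₁ x‖ ^ 2) (volume.restrict Ω) :=
    (((hG₁c.pow 2)).integrable_of_hasCompactSupport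
      (HasCompactSupport.intro hu₁s fun x hx => by
        simp [image_eq_zero_of_notMem_tsupport hx])).integrableOn
  have hG₂sq : Integrable (fun x => ‖u₂ x‖ ^ 2) (volume.restrict Ω) :=
    (((hG₂c.pow 2)).integrable_of_hasCompactSupport
      (HasCompactSupport.intro hu₂s fun x hx => by
        simp [image_eq_zero_of_notMem_tsupport hx])).integrableOn
  have hFG : Integrable
      (fun x => Real.sqrt (∑ i : Fin n, ‖pdE n u₁ i x‖ ^ 2) * ‖u₂ x‖) (volume.restrict Ω) :=
    ((hF₁c.mul hG₂c).integrable_of_hasCompactSupport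
      (HasCompactSupport.intro hu₂s fun x hx => by
        simp [image_eq_zero_of_notMem_tsupport hx])).integrableOn
  have hG₁G₂ : Integrable (fun x => ‖u₁ x‖ * ‖u₂ x‖) (volume.restrict Ω) :=
    ((hG₁c.mul hG₂c).integrable_of_hasCompactSupport
      (HasCompactSupport.intro hu₂s fun x hx => by
        simp [image_eq_zero_of_notMem_tsupport hx])).integrableOn
  have hG₂G₁ : Integrable (fun x => ‖u₂ x‖ * ‖u₁ x‖) (volume.restrict Ω) :=
    ((hG₂c.mul hG₁c).integrable_of_hasCompactSupport
      (HasCompactSupport.intro hu₁s fun x hx => by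
        simp [image_eq_zero_of_notMem_tsupport hx])).integrableOn
  -- ∫ F₁² = D₁
  have hD₁eq : ∫ x in Ω, Real.sqrt (∑ i : Fin n, ‖pdE n u₁ i x‖ ^ 2) ^ 2 = D₁ := by
    rw [hD₁def]
    exact integral_congr_ae (Filter.Eventually.of_forall fun x => Real.sq_sqrt (by positivity))
  -- Cauchy–Schwarz bounds
  have hCS_b : ∫ x in Ω, Real.sqrt (∑ i : Fin n, ‖pdE n u₁ i x‖ ^ 2) * ‖u₂ x‖ ≤
      Real.sqrt D₁ * Real.sqrt N₂ := by
    have h := integral_CS (fun x => Real.sqrt_nonneg _) (fun x => norm_nonneg _)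
      hF₁c.aestronglyMeasurable hG₂c.aestronglyMeasurable hF₁sq hG₂sq
    rwa [hD₁eq, ← hN₂def] at h
  have hCS_c : ∫ x in Ω, ‖u₁ x‖ * ‖u₂ x‖ ≤ Real.sqrt N₁ * Real.sqrt N₂ := by
    have h := integral_CS (fun x => norm_nonneg _) (fun x => norm_nonneg _)
      hG₁c.aestronglyMeasurable hG₂c.aestronglyMeasurable hG₁sq hG₂sq
    rwa [← hN₁def, ← hN₂def] at h
  have hCS_a : ∫ x in Ω, ‖u₂ x‖ * ‖u₁ x‖ ≤ Real.sqrt N₂ * Real.sqrt N₁ := by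
    have h := integral_CS (fun x => norm_nonneg _) (fun x => norm_nonneg _)
      hG₂c.aestronglyMeasurable hG₁c.aestronglyMeasurable hG₂sq hG₁sq
    rwa [← hN₂def, ← hN₁def] at h
  -- Norm bounds on the three complex integrals
  have hIb : ‖∫ x in Ω, (∑ i : Fin n, b x i * pdE n u₁ i x) * starRingEnd ℂ (u₂ x)‖ ≤
      M_b * (Real.sqrt D₁ * Real.sqrt N₂) := by
    refine le_trans (norm_integral_le_integral_norm _) ?_
    have step : (∫ x in Ω, ‖(∑ i : Fin n, b x i * pdE n u₁ i x) * starRingEnd ℂ (u₂ x)‖) ≤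
        ∫ x in Ω, M_b * (Real.sqrt (∑ i : Fin n, ‖pdE n u₁ i x‖ ^ 2) * ‖u₂ x‖) := by
      refine integral_mono_of_nonneg (Filter.Eventually.of_forall fun x => norm_nonneg _)
        (hFG.const_mul M_b) ?_
      filter_upwards [ae_restrict_mem hΩ.measurableSet] with x hxΩ
      have h1 : ‖∑ i : Fin n, b x i * pdE n u₁ i x‖ ≤
          ∑ i : Fin n, ‖b x i‖ * ‖pdE n u₁ i x‖ := by
        refine (norm_sum_le _ _).trans (le_of_eq ?_)
        simp [norm_mul]
      have h2 : (∑ i : Fin n, ‖b x i‖ * ‖pdE n u₁ i x‖) ≤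
          ‖b x‖ * Real.sqrt (∑ i : Fin n, ‖pdE n u₁ i x‖ ^ 2) := by
        have hsq := Finset.sum_mul_sq_le_sq_mul_sq Finset.univ
          (fun i => ‖b x i‖) (fun i => ‖pdE n u₁ i x‖)
        have hnn : 0 ≤ ∑ i : Fin n, ‖b x i‖ * ‖pdE n u₁ i x‖ :=
          Finset.sum_nonneg fun i _ => mul_nonneg (norm_nonneg _) (norm_nonneg _)
        calc (∑ i : Fin n, ‖b x i‖ * ‖pdE n u₁ i x‖)
            = Real.sqrt ((∑ i : Fin n, ‖b x i‖ * ‖pdE n u₁ i x‖) ^ 2) :=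
              (Real.sqrt_sq hnn).symm
          _ ≤ Real.sqrt ((∑ i : Fin n, ‖b x i‖ ^ 2) * (∑ i : Fin n, ‖pdE n u₁ i x‖ ^ 2)) :=
              Real.sqrt_le_sqrt hsq
          _ = Real.sqrt (∑ i : Fin n, ‖b x i‖ ^ 2) *
              Real.sqrt (∑ i : Fin n, ‖pdE n u₁ i x‖ ^ 2) := Real.sqrt_mul (by positivity) _
          _ = ‖b x‖ * Real.sqrt (∑ i : Fin n, ‖pdE n u₁ i x‖ ^ 2) := by
              rw [EuclideanSpace.norm_eq]
      calc ‖(∑ i : Fin n, b x i * pdE n u₁ i x) * starRingEnd ℂ (u₂ x)‖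
          = ‖∑ i : Fin n, b x i * pdE n u₁ i x‖ * ‖u₂ x‖ := by simp [norm_mul]
        _ ≤ (M_b * Real.sqrt (∑ i : Fin n, ‖pdE n u₁ i x‖ ^ 2)) * ‖u₂ x‖ := by
            refine mul_le_mul_of_nonneg_right ?_ (norm_nonneg _)
            exact h1.trans (h2.trans
              (mul_le_mul_of_nonneg_right (hbM x hxΩ) (Real.sqrt_nonneg _)))
        _ = M_b * (Real.sqrt (∑ i : Fin n, ‖pdE n u₁ i x‖ ^ 2) * ‖u₂ x‖) := by ring
    refine step.trans ?_
    rw [MeasureTheory.integral_const_mul]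
    exact mul_le_mul_of_nonneg_left hCS_b hMb
  have hIc : ‖∫ x in Ω, c x * u₁ x * starRingEnd ℂ (u₂ x)‖ ≤
      M_c * (Real.sqrt N₁ * Real.sqrt N₂) := by
    refine le_trans (norm_integral_le_integral_norm _) ?_
    have step : (∫ x in Ω, ‖c x * u₁ x * starRingEnd ℂ (u₂ x)‖) ≤
        ∫ x in Ω, M_c * (‖u₁ x‖ * ‖u₂ x‖) := by
      refine integral_mono_of_nonneg (Filter.Eventually.of_forall fun x => norm_nonneg _)
        (hG₁G₂.const_mul M_c) ?_
      filter_upwards [ae_restrict_mem hΩ.measurableSet] with x hxΩ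
      have : ‖c x * u₁ x * starRingEnd ℂ (u₂ x)‖ = ‖c x‖ * ‖u₁ x‖ * ‖u₂ x‖ := by
        simp [norm_mul]
      rw [this]
      have := mul_le_mul_of_nonneg_right (hcM x hxΩ)
        (mul_nonneg (norm_nonneg (u₁ x)) (norm_nonneg (u₂ x)))
      nlinarith [norm_nonneg (u₁ x), norm_nonneg (u₂ x)]
    refine step.trans ?_
    rw [MeasureTheory.integral_const_mul]
    exact mul_le_mul_of_nonneg_left hCS_c hMc
  have hIa : ‖∫ x in Ω, (a x)⁻¹ * u₂ x * starRingEnd ℂ (u₁ x)‖ ≤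
      M_a * (Real.sqrt N₂ * Real.sqrt N₁) := by
    refine le_trans (norm_integral_le_integral_norm _) ?_
    have step : (∫ x in Ω, ‖(a x)⁻¹ * u₂ x * starRingEnd ℂ (u₁ x)‖) ≤
        ∫ x in Ω, M_a * (‖u₂ x‖ * ‖u₁ x‖) := by
      refine integral_mono_of_nonneg (Filter.Eventually.of_forall fun x => norm_nonneg _)
        (hG₂G₁.const_mul M_a) ?_
      filter_upwards [ae_restrict_mem hΩ.measurableSet] with x hxΩ
      have : ‖(a x)⁻¹ * u₂ x * starRingEnd ℂ (u₁ x)‖ = ‖(a x)⁻¹‖ * ‖u₂ x‖ * ‖u₁ x‖ := by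
        simp [norm_mul]
      rw [this]
      have := mul_le_mul_of_nonneg_right (haM x hxΩ)
        (mul_nonneg (norm_nonneg (u₂ x)) (norm_nonneg (u₁ x)))
      nlinarith [norm_nonneg (u₁ x), norm_nonneg (u₂ x)]
    refine step.trans ?_
    rw [MeasureTheory.integral_const_mul]
    exact mul_le_mul_of_nonneg_left hCS_a hMa
  -- real parts
  set Ib := ∫ x in Ω, (∑ i : Fin n, b x i * pdE n u₁ i x) * starRingEnd ℂ (u₂ x) with hIbdef
  set Ic := ∫ x in Ω, c x * u₁ x * starRingEnd ℂ (u₂ x) with hIcdef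
  set Ia := ∫ x in Ω, (a x)⁻¹ * u₂ x * starRingEnd ℂ (u₁ x) with hIadef
  have hre : (sesquiBDiag n Ω κ a c b u₁ u₂).re =
      D₁ + D₂ + ((1 / Complex.I) * Ib).re - ((κ : ℂ) ^ 2 * Ic).re + Ia.re := by
    rw [hD₁def, hD₂def, hIbdef, hIcdef, hIadef]
    simp [sesquiBDiag]
  have hzb : -(M_b * (Real.sqrt D₁ * Real.sqrt N₂)) ≤ ((1 / Complex.I) * Ib).re := by
    refine le_trans ?_ (neg_norm_le_re _)
    rw [norm_mul, show ‖(1 : ℂ) / Complex.I‖ = 1 by simp, one_mul]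
    exact neg_le_neg hIb
  have hzc : ((κ : ℂ) ^ 2 * Ic).re ≤ κ ^ 2 * (M_c * (Real.sqrt N₁ * Real.sqrt N₂)) := by
    refine (re_le_norm _).trans ?_
    rw [norm_mul, show ‖((κ : ℂ)) ^ 2‖ = κ ^ 2 by
      rw [norm_pow, Complex.norm_real]; exact sq_abs κ]
    exact mul_le_mul_of_nonneg_left hIc (sq_nonneg κ)
  have hza : -(M_a * (Real.sqrt N₂ * Real.sqrt N₁)) ≤ Ia.re :=
    le_trans (neg_le_neg hIa) (neg_norm_le_re _)
  -- elementary facts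
  clear_value D₁ D₂ N₁ N₂ Ib Ic Ia
  have hD₁0 : 0 ≤ D₁ := by
    rw [hD₁def]; exact integral_nonneg fun x => by positivity
  have hD₂0 : 0 ≤ D₂ := by
    rw [hD₂def]; exact integral_nonneg fun x => by positivity
  have main : (1 - (1 / 2) * C_P ^ 2 * (M_b ^ 2 + κ ^ 2 * M_c + M_a)) * D₁
      + (1 / 2) * (1 - C_P ^ 2 * (κ ^ 2 * M_c + M_a)) * D₂ ≤
      (sesquiBDiag n Ω κ a c b u₁ u₂).re := by
    rw [hre]
    exact arith_main M_a M_b M_c C_P κ hMa hMb hMc hCP D₁ D₂ N₁ N₂ hD₁0 hD₂0 hP₁ hP₂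
      _ _ _ hzb hzc hza
  refine ⟨main, fun hpos1 hpos2 => le_trans ?_ main⟩
  calc min (1 - (1 / 2) * C_P ^ 2 * (M_b ^ 2 + κ ^ 2 * M_c + M_a))
        ((1 / 2) * (1 - C_P ^ 2 * (κ ^ 2 * M_c + M_a))) * (D₁ + D₂)
      = min (1 - (1 / 2) * C_P ^ 2 * (M_b ^ 2 + κ ^ 2 * M_c + M_a))
        ((1 / 2) * (1 - C_P ^ 2 * (κ ^ 2 * M_c + M_a))) * D₁
      + min (1 - (1 / 2) * C_P ^ 2 * (M_b ^ 2 + κ ^ 2 * M_c + M_a))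
        ((1 / 2) * (1 - C_P ^ 2 * (κ ^ 2 * M_c + M_a))) * D₂ := by ring
    _ ≤ (1 - (1 / 2) * C_P ^ 2 * (M_b ^ 2 + κ ^ 2 * M_c + M_a)) * D₁
      + (1 / 2) * (1 - C_P ^ 2 * (κ ^ 2 * M_c + M_a)) * D₂ :=
        add_le_add (mul_le_mul_of_nonneg_right (min_le_left _ _) hD₁0)
          (mul_le_mul_of_nonneg_right (min_le_right _ _) hD₂0)
end

section
/- Let n ≥ 1, let φ, ψ : ℝⁿ → ℝ be twice continuously differentiable functions satisfying the eikonal equations Σᵢ (∂ᵢψ)² = Σᵢ (∂ᵢφ)² and Σᵢ ∂ᵢφ ∂ᵢψ = 0 everywhere, let h > 0, and let u : ℝⁿ → ℂ be twice continuously differentiable. Then for every x ∈ ℝⁿ, e^{−(φ(x)+iψ(x))/h} · h² Δ( e^{(φ+iψ)/h} u )(x) = h² Δu(x) + 2h (T u)(x), where T u := Σᵢ (∂ᵢφ + i ∂ᵢψ) ∂ᵢu + (1/2)(Δφ + iΔψ) u, and Δf := Σᵢ ∂ᵢ∂ᵢ f is the Laplacian. -/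
/-- The `i`-th partial derivative of a complex-valued function on `ℝⁿ`. -/
noncomputable def pderivC (n : ℕ) (f : EuclideanSpace ℝ (Fin n) → ℂ) (i : Fin n)
    (x : EuclideanSpace ℝ (Fin n)) : ℂ :=
  fderiv ℝ f x (EuclideanSpace.single i 1)

/-- The `i`-th partial derivative of a real-valued function on `ℝⁿ`. -/
noncomputable def pderivR (n : ℕ) (f : EuclideanSpace ℝ (Fin n) → ℝ) (i : Fin n)
    (x : EuclideanSpace ℝ (Fin n)) : ℝ :=
  fderiv ℝ f x (EuclideanSpace.single i 1)

/-- The Laplacian `Δf = Σᵢ ∂ᵢ∂ᵢ f` of a complex-valued function on `ℝⁿ`. -/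
noncomputable def laplacianC (n : ℕ) (f : EuclideanSpace ℝ (Fin n) → ℂ)
    (x : EuclideanSpace ℝ (Fin n)) : ℂ :=
  ∑ i : Fin n, pderivC n (pderivC n f i) i x

/-- The Laplacian `Δf = Σᵢ ∂ᵢ∂ᵢ f` of a real-valued function on `ℝⁿ`. -/
noncomputable def laplacianR (n : ℕ) (f : EuclideanSpace ℝ (Fin n) → ℝ)
    (x : EuclideanSpace ℝ (Fin n)) : ℝ :=
  ∑ i : Fin n, pderivR n (pderivR n f i) i x

/-- The transport operator `T u = (∇φ + i∇ψ)·∇u + (1/2)(Δφ + iΔψ) u`. -/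
noncomputable def transportT (n : ℕ) (φ ψ : EuclideanSpace ℝ (Fin n) → ℝ)
    (u : EuclideanSpace ℝ (Fin n) → ℂ) (x : EuclideanSpace ℝ (Fin n)) : ℂ :=
  ∑ i : Fin n, ((pderivR n φ i x : ℂ) + Complex.I * (pderivR n ψ i x : ℂ)) * pderivC n u i x
    + (1 / 2) * ((laplacianR n φ x : ℂ) + Complex.I * (laplacianR n ψ x : ℂ)) * u x

/-!
Writing `w = (φ + iψ)/h`, the Leibniz and chain rules give
`e^{-w} Δ(e^w u) = (Σᵢ (∂ᵢw)²) u + (Δw) u + 2 Σᵢ ∂ᵢw ∂ᵢu + Δu`.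
The eikonal equations are exactly the real and imaginary parts of `Σᵢ (∂ᵢφ + i∂ᵢψ)² = 0`,
so the first term vanishes, and multiplying by `h²` leaves `h²Δu + 2hTu`.
-/

open Finset

section

variable {n : ℕ}

lemma pderivC_eq_of_hasFDerivAt {f : EuclideanSpace ℝ (Fin n) → ℂ}
    {f' : EuclideanSpace ℝ (Fin n) →L[ℝ] ℂ} {x : EuclideanSpace ℝ (Fin n)}
    (hf : HasFDerivAt f f' x) (i : Fin n) :
    pderivC n f i x = f' (EuclideanSpace.single i 1) := by
  rw [pderivC, hf.fderiv]

lemma contDiff_pderivC {f : EuclideanSpace ℝ (Fin n) → ℂ} (hf : ContDiff ℝ 2 f) (i : Fin n) :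
    ContDiff ℝ 1 (pderivC n f i) :=
  (hf.fderiv_right (by norm_num)).clm_apply contDiff_const

lemma contDiff_pderivR {f : EuclideanSpace ℝ (Fin n) → ℝ} (hf : ContDiff ℝ 2 f) (i : Fin n) :
    ContDiff ℝ 1 (pderivR n f i) :=
  (hf.fderiv_right (by norm_num)).clm_apply contDiff_const

section Leibniz

variable {f g : EuclideanSpace ℝ (Fin n) → ℂ} {x : EuclideanSpace ℝ (Fin n)}

lemma pderivC_add (hf : DifferentiableAt ℝ f x) (hg : DifferentiableAt ℝ g x) (i : Fin n) :
    pderivC n (fun y => f y + g y) i x = pderivC n f i x + pderivC n g i x := by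
  rw [pderivC_eq_of_hasFDerivAt (f := fun y => f y + g y) (hf.hasFDerivAt.add hg.hasFDerivAt)]
  rfl

lemma pderivC_mul (hf : DifferentiableAt ℝ f x) (hg : DifferentiableAt ℝ g x) (i : Fin n) :
    pderivC n (fun y => f y * g y) i x = pderivC n f i x * g x + f x * pderivC n g i x := by
  rw [pderivC_eq_of_hasFDerivAt (f := fun y => f y * g y) (hf.hasFDerivAt.mul hg.hasFDerivAt)]
  simp only [add_apply, smul_apply, smul_eq_mul, pderivC]
  ring

lemma pderivC_cexp_mul (hf : DifferentiableAt ℝ f x) (hg : DifferentiableAt ℝ g x)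
    (i : Fin n) :
    pderivC n (fun y => Complex.exp (f y) * g y) i x =
      Complex.exp (f x) * (pderivC n f i x * g x + pderivC n g i x) := by
  rw [pderivC_mul hf.cexp hg, pderivC_eq_of_hasFDerivAt hf.hasFDerivAt.cexp]
  simp only [smul_apply, smul_eq_mul, pderivC]
  ring

end Leibniz

lemma pderivC_pderivC_cexp_mul {w u : EuclideanSpace ℝ (Fin n) → ℂ}
    (hw : ContDiff ℝ 2 w) (hu : ContDiff ℝ 2 u) (i : Fin n) (x : EuclideanSpace ℝ (Fin n)) :
    pderivC n (pderivC n (fun y => Complex.exp (w y) * u y) i) i x =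
      Complex.exp (w x) * ((pderivC n w i x) ^ 2 * u x + pderivC n (pderivC n w i) i x * u x
        + 2 * pderivC n w i x * pderivC n u i x + pderivC n (pderivC n u i) i x) := by
  have hw1 := hw.differentiable two_ne_zero
  have hu1 := hu.differentiable two_ne_zero
  have hwi := (contDiff_pderivC hw i).differentiable one_ne_zero
  have hui := (contDiff_pderivC hu i).differentiable one_ne_zero
  have first : pderivC n (fun y => Complex.exp (w y) * u y) i =
      fun y => Complex.exp (w y) * (pderivC n w i y * u y + pderivC n u i y) :=
    funext fun y => pderivC_cexp_mul (hw1 y) (hu1 y) i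
  rw [first, pderivC_cexp_mul (g := fun y => pderivC n w i y * u y + pderivC n u i y) (hw1 x)
      (((hwi x).mul (hu1 x)).add (hui x)),
    pderivC_add (f := fun y => pderivC n w i y * u y) ((hwi x).mul (hu1 x)) (hui x),
    pderivC_mul (hwi x) (hu1 x)]
  ring

lemma laplacianC_cexp_mul {w u : EuclideanSpace ℝ (Fin n) → ℂ}
    (hw : ContDiff ℝ 2 w) (hu : ContDiff ℝ 2 u) (x : EuclideanSpace ℝ (Fin n)) :
    laplacianC n (fun y => Complex.exp (w y) * u y) x =
      Complex.exp (w x) * ((∑ i, (pderivC n w i x) ^ 2) * u x + laplacianC n w x * u x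
        + 2 * ∑ i, pderivC n w i x * pderivC n u i x + laplacianC n u x) := by
  simp only [laplacianC, pderivC_pderivC_cexp_mul hw hu, ← mul_sum, sum_add_distrib, sum_mul,
    mul_assoc]

lemma pderivC_ofReal_add_I_mul_div {φ ψ : EuclideanSpace ℝ (Fin n) → ℝ}
    {x : EuclideanSpace ℝ (Fin n)} (hφ : DifferentiableAt ℝ φ x) (hψ : DifferentiableAt ℝ ψ x)
    (c : ℂ) (i : Fin n) :
    pderivC n (fun y => ((φ y : ℂ) + Complex.I * (ψ y : ℂ)) / c) i x =
      ((pderivR n φ i x : ℂ) + Complex.I * (pderivR n ψ i x : ℂ)) / c := by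
  have hφ' := Complex.ofRealCLM.hasFDerivAt.comp x hφ.hasFDerivAt
  have hψ' := Complex.ofRealCLM.hasFDerivAt.comp x hψ.hasFDerivAt
  simp only [div_eq_mul_inv]
  rw [pderivC_eq_of_hasFDerivAt (f := fun y => ((φ y : ℂ) + Complex.I * (ψ y : ℂ)) * c⁻¹)
    ((hφ'.add (hψ'.const_mul Complex.I)).mul_const c⁻¹)]
  simp only [smul_apply, add_apply, ContinuousLinearMap.comp_apply, Complex.ofRealCLM_apply,
    smul_eq_mul, pderivR]
  ring

lemma laplacianC_ofReal_add_I_mul_div {φ ψ : EuclideanSpace ℝ (Fin n) → ℝ}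
    (hφ : ContDiff ℝ 2 φ) (hψ : ContDiff ℝ 2 ψ) (c : ℂ) (x : EuclideanSpace ℝ (Fin n)) :
    laplacianC n (fun y => ((φ y : ℂ) + Complex.I * (ψ y : ℂ)) / c) x =
      ((laplacianR n φ x : ℂ) + Complex.I * (laplacianR n ψ x : ℂ)) / c := by
  have hφ1 := hφ.differentiable two_ne_zero
  have hψ1 := hψ.differentiable two_ne_zero
  have first (i : Fin n) := funext fun y => pderivC_ofReal_add_I_mul_div (hφ1 y) (hψ1 y) c i
  simp only [laplacianC, laplacianR, first, fun i => pderivC_ofReal_add_I_mul_div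
    ((contDiff_pderivR hφ i).differentiable one_ne_zero x)
    ((contDiff_pderivR hψ i).differentiable one_ne_zero x) c i]
  push_cast
  rw [← sum_div, sum_add_distrib, ← mul_sum]

end

lemma sum_sq_ofReal_add_I_mul_eq_zero {ι : Type*} (s : Finset ι) (a b : ι → ℝ)
    (h_sq : ∑ i ∈ s, b i ^ 2 = ∑ i ∈ s, a i ^ 2) (h_mul : ∑ i ∈ s, a i * b i = 0) :
    ∑ i ∈ s, ((a i : ℂ) + Complex.I * (b i : ℂ)) ^ 2 = 0 := by
  have expand (i : ι) : ((a i : ℂ) + Complex.I * (b i : ℂ)) ^ 2 =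
      ((a i ^ 2 - b i ^ 2 : ℝ) : ℂ) + 2 * Complex.I * ((a i * b i : ℝ) : ℂ) := by
    push_cast
    linear_combination (b i : ℂ) ^ 2 * Complex.I_sq
  simp only [expand, sum_add_distrib, ← mul_sum, ← Complex.ofReal_sum, sum_sub_distrib, h_sq,
    h_mul]
  simp

theorem conjugated_laplacian_eikonal_general (n : ℕ)
    (φ ψ : EuclideanSpace ℝ (Fin n) → ℝ)
    (hφ : ContDiff ℝ 2 φ) (hψ : ContDiff ℝ 2 ψ)
    (heik1 : ∀ x, ∑ i : Fin n, (pderivR n ψ i x) ^ 2 = ∑ i : Fin n, (pderivR n φ i x) ^ 2)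
    (heik2 : ∀ x, ∑ i : Fin n, pderivR n φ i x * pderivR n ψ i x = 0)
    (h : ℝ) (hh : 0 < h)
    (u : EuclideanSpace ℝ (Fin n) → ℂ) (hu : ContDiff ℝ 2 u)
    (x : EuclideanSpace ℝ (Fin n)) :
    Complex.exp (-(((φ x : ℂ) + Complex.I * (ψ x : ℂ)) / (h : ℂ))) * (h : ℂ) ^ 2 *
        laplacianC n
          (fun y => Complex.exp (((φ y : ℂ) + Complex.I * (ψ y : ℂ)) / (h : ℂ)) * u y) x =
      (h : ℂ) ^ 2 * laplacianC n u x + 2 * (h : ℂ) * transportT n φ ψ u x := by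
  have hne : (h : ℂ) ≠ 0 := Complex.ofReal_ne_zero.mpr hh.ne'
  have hφ1 := hφ.differentiable two_ne_zero
  have hψ1 := hψ.differentiable two_ne_zero
  have hw : ContDiff ℝ 2 fun y => ((φ y : ℂ) + Complex.I * (ψ y : ℂ)) / (h : ℂ) :=
    ((Complex.ofRealCLM.contDiff.comp hφ).add
      (contDiff_const.mul (Complex.ofRealCLM.contDiff.comp hψ))).div_const _
  have eikonal := sum_sq_ofReal_add_I_mul_eq_zero univ _ _ (heik1 x) (heik2 x)
  rw [laplacianC_cexp_mul hw hu, laplacianC_ofReal_add_I_mul_div hφ hψ]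
  simp only [pderivC_ofReal_add_I_mul_div (hφ1 x) (hψ1 x), div_pow, ← sum_div, div_mul_eq_mul_div,
    eikonal, transportT]
  rw [Complex.exp_neg]
  field_simp
  ring

/-- **Conjugated semiclassical Laplacian under the eikonal equations.**
If `φ, ψ` are `C²` and satisfy `Σᵢ(∂ᵢψ)² = Σᵢ(∂ᵢφ)²` and `Σᵢ ∂ᵢφ ∂ᵢψ = 0`, then for
`C²` functions `u` and `h > 0`,
`e^{−(φ+iψ)/h} h² Δ(e^{(φ+iψ)/h}u) = h² Δu + 2h T u`. -/
theorem conjugated_laplacian_eikonal (n : ℕ) (hn : 1 ≤ n)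
    (φ ψ : EuclideanSpace ℝ (Fin n) → ℝ)
    (hφ : ContDiff ℝ 2 φ) (hψ : ContDiff ℝ 2 ψ)
    (heik1 : ∀ x, ∑ i : Fin n, (pderivR n ψ i x) ^ 2 = ∑ i : Fin n, (pderivR n φ i x) ^ 2)
    (heik2 : ∀ x, ∑ i : Fin n, pderivR n φ i x * pderivR n ψ i x = 0)
    (h : ℝ) (hh : 0 < h)
    (u : EuclideanSpace ℝ (Fin n) → ℂ) (hu : ContDiff ℝ 2 u)
    (x : EuclideanSpace ℝ (Fin n)) :
    Complex.exp (-(((φ x : ℂ) + Complex.I * (ψ x : ℂ)) / (h : ℂ))) * (h : ℂ) ^ 2 *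
        laplacianC n
          (fun y => Complex.exp (((φ y : ℂ) + Complex.I * (ψ y : ℂ)) / (h : ℂ)) * u y) x =
      (h : ℂ) ^ 2 * laplacianC n u x + 2 * (h : ℂ) * transportT n φ ψ u x :=
  conjugated_laplacian_eikonal_general n φ ψ hφ hψ heik1 heik2 h hh u hu x
end
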